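/- If a gem (M, c) has no 2-edge cut, then every 3-edge cut of M consists of the three edges incident with a single common vertex; in particular (this being the cubic-graph formulation of the property) M is cyclically-4-edge-connected. -/

import Mathlib

/-- The three colours used in a gem. -/
inductive Colour : Type
  | red | yellow | blue
deriving DecidableEq

/-- A proper edge colouring of a graph: two distinct edges sharing an endpoint
receive different colours. -/
def ProperEdgeColouring {V : Type*} {α : Type*} (G : SimpleGraph V) (c : Sym2 V → α) : Prop :=
  ∀ e₁ ∈ G.edgeSet, ∀ e₂ ∈ G.edgeSet, e₁ ≠ e₂ → (∃ v, v ∈ e₁ ∧ v ∈ e₂) → c e₁ ≠ c e₂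

/-- A cubic graph: every vertex has degree 3. -/
def IsCubic {V : Type*} (G : SimpleGraph V) : Prop :=
  ∀ v : V, (G.neighborSet v).ncard = 3

/-- The edge cut determined by a vertex set `S`: the set of edges of `G`
with exactly one endpoint in `S`. -/
def edgeCut {V : Type*} (G : SimpleGraph V) (S : Set V) : Set (Sym2 V) :=
  {e | ∃ u v, e = s(u, v) ∧ G.Adj u v ∧ u ∈ S ∧ v ∉ S}

/-- The spanning subgraph of `G` formed by the edges coloured `x` or `y`. -/
def twoColourSubgraph {V : Type*} {α : Type*} (G : SimpleGraph V) (c : Sym2 V → α)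
    (x y : α) : SimpleGraph V where
  Adj u v := G.Adj u v ∧ (c s(u, v) = x ∨ c s(u, v) = y)
  symm := by
    constructor
    intro u v h
    refine ⟨h.1.symm, ?_⟩
    rw [Sym2.eq_swap]
    exact h.2
  loopless := ⟨fun v h => G.irrefl h.1⟩

/-- A gem: a connected cubic graph with a proper 3-edge-colouring (red, yellow,
blue) such that every connected component of the spanning subgraph formed by
the red and blue edges is a cycle of length 4 (equivalently, for a simple
graph: that subgraph is 2-regular and each of its connected components has
exactly 4 vertices). -/
structure IsGem {V : Type*} (M : SimpleGraph V) (c : Sym2 V → Colour) : Prop where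
  connected : M.Connected
  cubic : IsCubic M
  proper : ProperEdgeColouring M c
  rb_two_regular : ∀ v : V,
    ((twoColourSubgraph M c Colour.red Colour.blue).neighborSet v).ncard = 2
  rb_components_card4 : ∀ v : V,
    ((twoColourSubgraph M c Colour.red Colour.blue).connectedComponentMk v).supp.ncard = 4

/-!
Each colour class of a gem is a perfect matching, so the number of edges of a given colour
in the cut of `S` has the parity of `|S|`; as there are three colours, a 3-edge cut contains
exactly one edge of each colour. The red cut edge `ua` lies on a red–blue 4-cycle `u a d b`
whose other red edge `bd` is not in the cut, so `u` or `a` has both its red and its blue edge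
in the cut. If a vertex has two edges in a 3-edge cut that is not its star, moving it to the
other side leaves a 2-edge cut.
-/

instance : Fintype Colour :=
  ⟨{.red, .yellow, .blue}, fun x => by cases x <;> simp⟩

theorem Colour.card_eq : Fintype.card Colour = 3 := rfl

open scoped symmDiff in
theorem Set.ncard_symmDiff_add_two_mul_ncard_inter {α : Type*} {s t : Set α} (hs : s.Finite)
    (ht : t.Finite) : (s ∆ t).ncard + 2 * (s ∩ t).ncard = s.ncard + t.ncard := by
  rw [Set.symmDiff_def, Set.ncard_union_eq disjoint_sdiff_sdiff hs.sdiff ht.sdiff,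
    ← Set.ncard_inter_add_ncard_sdiff_eq_ncard s t hs,
    ← Set.ncard_inter_add_ncard_sdiff_eq_ncard t s ht, Set.inter_comm t s]
  ring

theorem Set.even_ncard_of_involutive {α : Type*} {f : α → α} (hf : Function.Involutive f)
    (hfix : ∀ x, f x ≠ x) {s : Set α} (hs : s.Finite) (hmaps : MapsTo f s s) :
    Even s.ncard := by
  classical
  have := hs.fintype
  let g : Function.End s := hmaps.restrict
  have hg : g ^ 2 ^ 1 = 1 := funext fun x => Subtype.ext (hf x)
  have hfree : Fintype.card g.fixedPoints = 0 :=
    Fintype.card_eq_zero_iff.mpr ⟨fun ⟨x, hx⟩ => hfix x (congrArg Subtype.val hx)⟩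
  have := Equiv.Perm.card_fixedPoints_modEq (p := 2) hg
  rw [hfree, Set.ncard_eq_toFinset_card', Set.toFinset_card] at *
  exact Nat.even_iff.mpr this

theorem SimpleGraph.ncard_incidenceSet {V : Type*} (G : SimpleGraph V) (v : V) :
    (G.incidenceSet v).ncard = (G.neighborSet v).ncard := by
  classical exact Set.ncard_congr' (G.incidenceSetEquivNeighborSet v)

section EdgeCut

variable {V : Type*} {G : SimpleGraph V} {S : Set V}

theorem mk_mem_edgeCut_iff {a b : V} :
    s(a, b) ∈ edgeCut G S ↔ G.Adj a b ∧ (a ∈ S ↔ b ∉ S) := by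
  constructor
  · rintro ⟨u, v, huv, hadj, hu, hv⟩
    rcases Sym2.eq_iff.mp huv with ⟨rfl, rfl⟩ | ⟨rfl, rfl⟩
    · exact ⟨hadj, by tauto⟩
    · exact ⟨hadj.symm, by tauto⟩
  · rintro ⟨hadj, hab⟩
    by_cases ha : a ∈ S
    · exact ⟨a, b, rfl, hadj, ha, hab.mp ha⟩
    · exact ⟨b, a, Sym2.eq_swap, hadj.symm, not_not.mp (mt hab.mpr ha), ha⟩

theorem edgeCut_subset_edgeSet : edgeCut G S ⊆ G.edgeSet := by
  rintro _ ⟨u, v, rfl, hadj, -⟩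
  exact hadj

theorem edgeCut_compl : edgeCut G Sᶜ = edgeCut G S := by
  ext e
  induction e using Sym2.ind with
  | _ a b => simp only [mk_mem_edgeCut_iff, Set.mem_compl_iff]; tauto

open scoped symmDiff in
theorem edgeCut_diff_singleton {u : V} (hu : u ∈ S) :
    edgeCut G (S \ {u}) = edgeCut G S ∆ G.incidenceSet u := by
  ext e
  induction e using Sym2.ind with
  | _ a b =>
    simp only [Set.mem_symmDiff, mk_mem_edgeCut_iff, SimpleGraph.mk'_mem_incidenceSet_iff,
      Set.mem_sdiff, Set.mem_singleton_iff]
    by_cases hab : G.Adj a b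
    · have := G.ne_of_adj hab
      by_cases ha : a = u <;> by_cases hb : b = u <;> subst_vars <;> tauto
    · tauto

theorem two_le_ncard_edgeCut_inter_incidenceSet [Finite V] {u v w : V} (hvw : v ≠ w)
    (hv : s(u, v) ∈ edgeCut G S) (hw : s(u, w) ∈ edgeCut G S) :
    2 ≤ (edgeCut G S ∩ G.incidenceSet u).ncard := by
  have hpair : ({s(u, v), s(u, w)} : Set (Sym2 V)) ⊆ edgeCut G S ∩ G.incidenceSet u := by
    simp only [Set.insert_subset_iff, Set.singleton_subset_iff]
    exact ⟨⟨hv, edgeCut_subset_edgeSet hv, Sym2.mem_mk_left _ _⟩,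
      ⟨hw, edgeCut_subset_edgeSet hw, Sym2.mem_mk_left _ _⟩⟩
  calc 2 = ({s(u, v), s(u, w)} : Set (Sym2 V)).ncard :=
        (Set.ncard_pair fun he => hvw (Sym2.congr_right.mp he)).symm
    _ ≤ _ := Set.ncard_le_ncard hpair

theorem edgeCut_eq_incidenceSet_of_two_le [Finite V]
    (hno2cut : ¬ ∃ S : Set V, S.Nonempty ∧ Sᶜ.Nonempty ∧ (edgeCut G S).ncard = 2)
    (hS : (edgeCut G S).ncard = 3) {u : V} (hu : (G.neighborSet u).ncard = 3)
    (h2 : 2 ≤ (edgeCut G S ∩ G.incidenceSet u).ncard) : edgeCut G S = G.incidenceSet u := by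
  wlog huS : u ∈ S generalizing S
  · rw [← edgeCut_compl] at hS h2 ⊢
    exact this hS h2 huS
  have hinc : (G.incidenceSet u).ncard = 3 := (G.ncard_incidenceSet u).trans hu
  by_contra hne
  have hnsub : ¬ G.incidenceSet u ⊆ edgeCut G S := fun hsub =>
    hne (Set.eq_of_subset_of_ncard_le hsub (by omega)).symm
  obtain ⟨e, ⟨he, hue⟩, heS⟩ := Set.not_subset.mp hnsub
  obtain ⟨w, rfl⟩ := Sym2.mem_iff_exists.mp hue
  have hadj : G.Adj u w := he
  have hwS : w ∈ S := by
    by_contra hwS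
    exact heS (mk_mem_edgeCut_iff.mpr ⟨hadj, iff_of_true huS hwS⟩)
  have hinter : (edgeCut G S ∩ G.incidenceSet u).ncard = 2 := by
    have := Set.ncard_lt_ncard (Set.inter_subset_right.ssubset_of_not_subset
      fun hsub => hnsub (hsub.trans Set.inter_subset_left))
    omega
  refine hno2cut ⟨S \ {u}, ⟨w, hwS, hadj.ne'⟩, ⟨u, fun hu => hu.2 rfl⟩, ?_⟩
  have := Set.ncard_symmDiff_add_two_mul_ncard_inter (Set.toFinite (edgeCut G S))
    (Set.toFinite (G.incidenceSet u))
  rw [edgeCut_diff_singleton huS]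
  omega

end EdgeCut

section OneFactorization

variable {V α : Type*} {G : SimpleGraph V} {c : Sym2 V → α}

def IsOneFactorization (G : SimpleGraph V) (c : Sym2 V → α) : Prop :=
  ∀ v x, ∃! w, G.Adj v w ∧ c s(v, w) = x

theorem ProperEdgeColouring.isOneFactorization [Finite α] (hc : ProperEdgeColouring G c)
    (hdeg : ∀ v, (G.neighborSet v).ncard = Nat.card α) : IsOneFactorization G c := by
  intro v x
  have hinj : Set.InjOn (fun w => c s(v, w)) (G.neighborSet v) := by
    intro w₁ h₁ w₂ h₂ heq
    by_contra hne
    exact hc _ h₁ _ h₂ (fun he => hne (Sym2.congr_right.mp he))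
      ⟨v, Sym2.mem_mk_left _ _, Sym2.mem_mk_left _ _⟩ heq
  have : Nonempty α := ⟨x⟩
  have himg : (fun w => c s(v, w)) '' G.neighborSet v = Set.univ :=
    Set.eq_of_subset_of_ncard_le (Set.subset_univ _)
      (by rw [hinj.ncard_image, hdeg, Set.ncard_univ])
  obtain ⟨w, hw, hwx⟩ := himg.symm ▸ Set.mem_univ x
  exact ⟨w, ⟨hw, hwx⟩, fun w' ⟨hw', hw'x⟩ => hinj hw' hw (hw'x.trans hwx.symm)⟩

theorem ncard_edgeCut_eq_sum_ncard_colour [Fintype α] [Finite V] (c : Sym2 V → α)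
    (S : Set V) : (edgeCut G S).ncard = ∑ x, {e | e ∈ edgeCut G S ∧ c e = x}.ncard := by
  classical
  have := Fintype.ofFinite V
  rw [Set.ncard_eq_toFinset_card',
    Finset.card_eq_sum_card_fiberwise (f := c) (t := Finset.univ) fun _ _ => Finset.mem_univ _]
  refine Finset.sum_congr rfl fun x _ => ?_
  rw [Set.ncard_eq_toFinset_card']
  congr 1
  ext e
  simp

namespace IsOneFactorization

variable (h : IsOneFactorization G c)

noncomputable def partner (v : V) (x : α) : V :=
  (h v x).exists.choose

theorem adj_partner (v : V) (x : α) : G.Adj v (h.partner v x) :=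
  (h v x).exists.choose_spec.1

theorem colour_partner (v : V) (x : α) : c s(v, h.partner v x) = x :=
  (h v x).exists.choose_spec.2

theorem eq_partner {v w : V} (hadj : G.Adj v w) : w = h.partner v (c s(v, w)) :=
  (h v _).unique ⟨hadj, rfl⟩ ⟨h.adj_partner v _, h.colour_partner v _⟩

theorem partner_partner (v : V) (x : α) : h.partner (h.partner v x) x = v := by
  have := h.eq_partner (h.adj_partner v x).symm
  rwa [Sym2.eq_swap, h.colour_partner, eq_comm] at this

theorem partner_eq_iff {v w : V} {x : α} : h.partner v x = w ↔ h.partner w x = v := by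
  constructor <;> rintro rfl <;> exact h.partner_partner _ x

theorem partner_ne_self (v : V) (x : α) : h.partner v x ≠ v :=
  (h.adj_partner v x).ne'

theorem partner_inj {v : V} {x y : α} : h.partner v x = h.partner v y ↔ x = y :=
  ⟨fun hxy => by rw [← h.colour_partner v x, hxy, h.colour_partner], fun hxy => hxy ▸ rfl⟩

theorem twoColourSubgraph_adj_partner_left (v : V) (x y : α) :
    (twoColourSubgraph G c x y).Adj v (h.partner v x) :=
  ⟨h.adj_partner v x, .inl (h.colour_partner v x)⟩

theorem twoColourSubgraph_adj_partner_right (v : V) (x y : α) :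
    (twoColourSubgraph G c x y).Adj v (h.partner v y) :=
  ⟨h.adj_partner v y, .inr (h.colour_partner v y)⟩

theorem partner_comm_of_ncard_supp_eq_four {x y : α} (hxy : x ≠ y) {v : V}
    (h4 : ((twoColourSubgraph G c x y).connectedComponentMk v).supp.ncard = 4) :
    h.partner (h.partner v y) x = h.partner (h.partner v x) y := by
  set C := (twoColourSubgraph G c x y).connectedComponentMk v
  obtain ⟨a, ha⟩ : ∃ a, h.partner v x = a := ⟨_, rfl⟩
  obtain ⟨b, hb⟩ : ∃ b, h.partner v y = b := ⟨_, rfl⟩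
  obtain ⟨d, hd⟩ : ∃ d, h.partner a y = d := ⟨_, rfl⟩
  rw [ha, hb, hd]
  have hmem : ∀ {w w' : V}, (twoColourSubgraph G c x y).Adj w w' → w ∈ C.supp → w' ∈ C.supp :=
    fun hadj hw =>
      (SimpleGraph.ConnectedComponent.connectedComponentMk_eq_of_adj hadj).symm.trans hw
  have hvC : v ∈ C.supp := rfl
  have haC : a ∈ C.supp := ha ▸ hmem (h.twoColourSubgraph_adj_partner_left v x y) hvC
  have hbC : b ∈ C.supp := hb ▸ hmem (h.twoColourSubgraph_adj_partner_right v x y) hvC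
  have hdC : d ∈ C.supp := hd ▸ hmem (h.twoColourSubgraph_adj_partner_right a x y) haC
  have hbxC : h.partner b x ∈ C.supp := hmem (h.twoColourSubgraph_adj_partner_left b x y) hbC
  have hav : a ≠ v := ha ▸ h.partner_ne_self v x
  have hbv : b ≠ v := hb ▸ h.partner_ne_self v y
  have hab : a ≠ b := ha ▸ hb ▸ mt h.partner_inj.mp hxy
  have hda : d ≠ a := hd ▸ h.partner_ne_self a y
  have hdv : d ≠ v := fun e => hab ((h.partner_eq_iff.mp (hd.trans e)).symm.trans hb)
  have hdb : d ≠ b := fun e => hav ((h.partner_eq_iff.mp (hd.trans e)).symm.trans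
    (h.partner_eq_iff.mp hb))
  have hsupp : C.supp = {v, a, b, d} := by
    refine (Set.eq_of_subset_of_ncard_le ?_ ?_ (Set.finite_of_ncard_pos (by omega))).symm
    · simp only [Set.insert_subset_iff, Set.singleton_subset_iff]
      exact ⟨hvC, haC, hbC, hdC⟩
    · rw [h4, Set.ncard_insert_of_notMem, Set.ncard_insert_of_notMem, Set.ncard_pair hdb.symm]
      · simp [hab, hda.symm]
      · simp [hav.symm, hbv.symm, hdv.symm]
  rw [hsupp] at hbxC
  rcases hbxC with e | e | e | e
  · exact absurd (ha.symm.trans (h.partner_eq_iff.mp e)) hab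
  · exact absurd ((h.partner_eq_iff.mp ha).symm.trans (h.partner_eq_iff.mp e)) hbv.symm
  · exact absurd e (h.partner_ne_self b x)
  · exact e

theorem ncard_edgeCut_colour (S : Set V) (x : α) :
    {e | e ∈ edgeCut G S ∧ c e = x}.ncard = {v ∈ S | h.partner v x ∉ S}.ncard := by
  have himg : {e | e ∈ edgeCut G S ∧ c e = x} =
      (fun v => s(v, h.partner v x)) '' {v ∈ S | h.partner v x ∉ S} := by
    ext e
    constructor
    · rintro ⟨⟨u, w, rfl, hadj, hu, hw⟩, rfl⟩
      exact ⟨u, ⟨hu, h.eq_partner hadj ▸ hw⟩, congrArg _ (h.eq_partner hadj).symm⟩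
    · rintro ⟨v, ⟨hv, hpv⟩, rfl⟩
      exact ⟨⟨v, _, rfl, h.adj_partner v x, hv, hpv⟩, h.colour_partner v x⟩
  rw [himg, Set.InjOn.ncard_image]
  rintro v₁ ⟨hv₁, -⟩ v₂ ⟨-, hpv₂⟩ he
  rcases Sym2.eq_iff.mp he with ⟨e, -⟩ | ⟨e, -⟩
  · exact e
  · exact absurd (e ▸ hv₁) hpv₂

theorem ncard_crossing_mod_two [Finite V] (S : Set V) (x : α) :
    {v ∈ S | h.partner v x ∉ S}.ncard % 2 = S.ncard % 2 := by
  have hD : Even {v ∈ S | h.partner v x ∈ S}.ncard :=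
    Set.even_ncard_of_involutive (h.partner_partner · x) (h.partner_ne_self · x) (Set.toFinite _)
      fun v ⟨hv, hpv⟩ => ⟨hpv, (h.partner_partner v x).symm ▸ hv⟩
  have hsplit :
      {v ∈ S | h.partner v x ∈ S}.ncard + {v ∈ S | h.partner v x ∉ S}.ncard = S.ncard :=
    Set.ncard_inter_add_ncard_sdiff_eq_ncard S ((h.partner · x) ⁻¹' S)
  obtain ⟨k, hk⟩ := hD
  omega

theorem ncard_edgeCut_colour_eq_one [Fintype α] [Finite V] (h : IsOneFactorization G c)
    (hodd : Odd (Fintype.card α)) {S : Set V} (hS : (edgeCut G S).ncard = Fintype.card α) (x : α) :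
    {e | e ∈ edgeCut G S ∧ c e = x}.ncard = 1 := by
  have hpar : ∀ y, {e | e ∈ edgeCut G S ∧ c e = y}.ncard % 2 = S.ncard % 2 := fun y => by
    rw [h.ncard_edgeCut_colour]; exact h.ncard_crossing_mod_two S y
  have hsum := (ncard_edgeCut_eq_sum_ncard_colour c S).symm.trans hS
  have hSodd : S.ncard % 2 = 1 := by
    by_contra hSeven
    refine Nat.not_even_iff_odd.mpr hodd (hsum ▸ Finset.even_sum _ fun y _ => ?_)
    exact Nat.even_iff.mpr (by have := hpar y; omega)
  have hpos : ∀ y ∈ Finset.univ, 1 ≤ {e | e ∈ edgeCut G S ∧ c e = y}.ncard := fun y _ => by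
    have := hpar y; omega
  exact ((Finset.sum_eq_sum_iff_of_le hpos).mp (by simp [hsum]) x (Finset.mem_univ x)).symm

end IsOneFactorization

end OneFactorization

namespace IsGem

variable {V : Type*} {M : SimpleGraph V} {c : Sym2 V → Colour}

theorem isOneFactorization (hgem : IsGem M c) : IsOneFactorization M c :=
  hgem.proper.isOneFactorization fun v =>
    (hgem.cubic v).trans (Nat.card_eq_fintype_card.trans Colour.card_eq).symm

theorem exists_adjacent_cut_edges [Finite V] (hgem : IsGem M c) {S : Set V}
    (hS : (edgeCut M S).ncard = 3) :
    ∃ u v w, v ≠ w ∧ s(u, v) ∈ edgeCut M S ∧ s(u, w) ∈ edgeCut M S := by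
  have h := hgem.isOneFactorization
  obtain ⟨e, hred⟩ := Set.ncard_eq_one.mp
    (h.ncard_edgeCut_colour_eq_one (by decide) hS Colour.red)
  have hua : e ∈ {e | e ∈ edgeCut M S ∧ c e = Colour.red} := hred ▸ rfl
  obtain ⟨⟨u, a, rfl, hadj, hu, ha⟩, hcol⟩ := hua
  have hpu : h.partner u .red = a := (hcol ▸ h.eq_partner hadj).symm
  obtain ⟨b, hb⟩ : ∃ b, h.partner u .blue = b := ⟨_, rfl⟩
  obtain ⟨d, hd⟩ : ∃ d, h.partner a .blue = d := ⟨_, rfl⟩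
  have hbd : h.partner b .red = d := by
    have := h.partner_comm_of_ncard_supp_eq_four (x := .red) (y := .blue) (by decide)
      (hgem.rb_components_card4 u)
    rwa [hb, hpu, hd] at this
  have hab : a ≠ b := hpu ▸ hb ▸ mt h.partner_inj.mp (by decide)
  have hside : b ∈ S ↔ d ∈ S := by
    by_contra hne
    have hbdS : s(b, d) ∈ {e | e ∈ edgeCut M S ∧ c e = Colour.red} :=
      ⟨mk_mem_edgeCut_iff.mpr ⟨hbd ▸ h.adj_partner b .red, by tauto⟩,
        hbd ▸ h.colour_partner b .red⟩
    rw [hred, Set.mem_singleton_iff] at hbdS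
    rcases Sym2.eq_iff.mp hbdS with ⟨hbu, -⟩ | ⟨hba, -⟩
    · exact h.partner_ne_self u .blue (hb.trans hbu)
    · exact hab hba.symm
  by_cases hbS : b ∈ S
  · refine ⟨a, u, d, fun hud => ?_, ?_, ?_⟩
    · exact absurd (h.partner_inj.mp ((h.partner_eq_iff.mp hpu).trans (hud.trans hd.symm)))
        (by decide)
    · exact Sym2.eq_swap ▸ mk_mem_edgeCut_iff.mpr ⟨hadj, iff_of_true hu ha⟩
    · exact mk_mem_edgeCut_iff.mpr
        ⟨hd ▸ h.adj_partner a .blue, iff_of_false ha (not_not.mpr (hside.mp hbS))⟩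
  · exact ⟨u, a, b, hab, mk_mem_edgeCut_iff.mpr ⟨hadj, iff_of_true hu ha⟩,
      mk_mem_edgeCut_iff.mpr ⟨hb ▸ h.adj_partner u .blue, iff_of_true hu hbS⟩⟩

end IsGem

/-- If a gem has no 2-edge cut, then every 3-edge cut consists of the three
edges incident with a single common vertex (the cubic-graph formulation of
being cyclically-4-edge-connected). -/
theorem gem_cyclically_four_edge_connected {V : Type*} [Fintype V]
    (M : SimpleGraph V) (c : Sym2 V → Colour) (hgem : IsGem M c)
    (hno2cut : ¬ ∃ S : Set V, S.Nonempty ∧ Sᶜ.Nonempty ∧ (edgeCut M S).ncard = 2) :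
    ∀ S : Set V, S.Nonempty → Sᶜ.Nonempty → (edgeCut M S).ncard = 3 →
      ∃ v : V, edgeCut M S = M.incidenceSet v := by
  intro S _ _ hS
  obtain ⟨u, v, w, hvw, hv, hw⟩ := hgem.exists_adjacent_cut_edges hS
  exact ⟨u, edgeCut_eq_incidenceSet_of_two_le hno2cut hS (hgem.cubic u)
    (two_le_ncard_edgeCut_inter_incidenceSet hvw hv hw)⟩
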